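/- (Bipartite structure of the chase s-warm) Let Q ⊆ 𝔽²_s and let C^Q = chase(Q, D_green) be the s-warm obtained from the single green full s-pider edge by closing under the rewriting rules of Q. Then every vertex of C^Q either has in-degree zero (it is a tail of all its incident edges) or has out-degree zero (it is an antenna of all its incident edges); consequently every directed H-path in C^Q has length one. -/

import Mathlib

/-!  S-warms and s-warm rewriting, following Gogacz–Marcinkowski,
"The Hunt for a Red Spider".  Labels are abstract ideal s-piders: a color
(`true` = green, `false` = red) together with an empty-or-singleton upper lame
index and lower lame index.  An edge `(S, a, b)` of a s-warm is the atom
`H(S, a, b)` with tail `a` and antenna `b`. -/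

namespace Swarm

/-- Abstract ideal s-piders `𝔸_s`. -/
abbrev ISp (s : ℕ) := Bool × Option (Fin s) × Option (Fin s)

/-- A labeled edge of a s-warm: label, tail, antenna. -/
abbrev Edge (s : ℕ) (V : Type*) := ISp s × V × V

/-- `x ⊆ y` for empty-or-singleton sets coded as `Option`. -/
def osub {s : ℕ} (x y : Option (Fin s)) : Prop := ∀ i : Fin s, x = some i → y = some i

/-- `y ∖ x` for empty-or-singleton sets coded as `Option` (assuming `x ⊆ y`). -/
def odiff {s : ℕ} (y x : Option (Fin s)) : Option (Fin s) :=
  match x with | none => y | some _ => none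

/-- The action of the s-pider query `f^I_J` (indices `IJ`) on labels:
`f^I_J(S^{I'}_{J'}) = S^{I∖I'}_{J∖J'}` of the opposite color, defined iff
`I' ⊆ I` and `J' ⊆ J`. -/
def LabStep {s : ℕ} (IJ : Option (Fin s) × Option (Fin s)) (p p' : ISp s) : Prop :=
  osub p.2.1 IJ.1 ∧ osub p.2.2 IJ.2 ∧
  p' = (!p.1, odiff IJ.1 p.2.1, odiff IJ.2 p.2.2)

/-- A binary s-pider rewriting rule `f ∧↑ f'` (`wedge = true`: shared antenna)
or `f ∨↑ f'` (`wedge = false`: shared tail), given by the index pairs of its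
two s-pider query components. -/
structure BRule (s : ℕ) where
  wedge : Bool
  f : Option (Fin s) × Option (Fin s)
  f' : Option (Fin s) × Option (Fin s)

/-- The vertices of a s-warm. -/
def verts {s : ℕ} {V : Type*} (D : Set (Edge s V)) : Set V :=
  {v | ∃ e ∈ D, v = e.2.1 ∨ v = e.2.2}

/-- One execution of the rewriting rule `Q` in the s-warm `D`, with input edges
`e1, e2` (same color, sharing antenna resp. tail), creating a fresh vertex and the
two output edges `o1, o2` of the opposite color, provided no witness already
exists; `D'` is the resulting s-warm. -/
def SwStepAt {s : ℕ} {V : Type*} (Q : BRule s) (D : Set (Edge s V))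
    (e1 e2 o1 o2 : Edge s V) (D' : Set (Edge s V)) : Prop :=
  e1 ∈ D ∧ e2 ∈ D ∧ e1.1.1 = e2.1.1 ∧
  LabStep Q.f e1.1 o1.1 ∧ LabStep Q.f' e2.1 o2.1 ∧
  (if Q.wedge then
    e1.2.2 = e2.2.2 ∧ o1.2.1 = e1.2.1 ∧ o2.2.1 = e2.2.1 ∧ o1.2.2 = o2.2.2 ∧
      o1.2.2 ∉ verts D ∧
      ¬ ∃ c, (o1.1, e1.2.1, c) ∈ D ∧ (o2.1, e2.2.1, c) ∈ D
  else
    e1.2.1 = e2.2.1 ∧ o1.2.2 = e1.2.2 ∧ o2.2.2 = e2.2.2 ∧ o1.2.1 = o2.2.1 ∧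
      o1.2.1 ∉ verts D ∧
      ¬ ∃ c, (o1.1, c, e1.2.2) ∈ D ∧ (o2.1, c, e2.2.2) ∈ D) ∧
  D' = D ∪ {o1, o2}

/-- The `ToDo` set of a s-warm: the rule instances that can still be executed. -/
def SwToDo {s : ℕ} {V : Type*} (𝒬 : Set (BRule s)) (D : Set (Edge s V)) :
    Set (BRule s × Edge s V × Edge s V) :=
  {q | q.1 ∈ 𝒬 ∧ ∃ o1 o2 D', SwStepAt q.1 D q.2.1 q.2.2 o1 o2 D'}

/-- Union of the stages strictly below `i`. -/
def partUnion {X : Type*} (seq : Ordinal.{0} → Set X) (i : Ordinal.{0}) : Set X :=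
  ⋃ j ∈ Set.Iio i, seq j

/-- A fair rewriting (chase) sequence for the rule set `𝒬` starting from `D0`. -/
structure SwChase {s : ℕ} {V : Type*} (𝒬 : Set (BRule s)) (D0 : Set (Edge s V)) where
  len : Ordinal.{0}
  pos : 0 < len
  seq : Ordinal.{0} → Set (Edge s V)
  init : seq 0 = D0
  step : ∀ i, 0 < i → i < len →
    ∃ q ∈ SwToDo 𝒬 (partUnion seq i), ∃ o1 o2,
      SwStepAt q.1 (partUnion seq i) q.2.1 q.2.2 o1 o2 (seq i)
  fair : ∀ i < len, ∀ q ∈ SwToDo 𝒬 (partUnion seq i),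
    ∃ k, i < k ∧ k ≤ len ∧ q ∉ SwToDo 𝒬 (partUnion seq k)

/-- The result `chase(𝒬, D0)` of a rewriting sequence. -/
def SwChase.result {s : ℕ} {V : Type*} {𝒬 : Set (BRule s)} {D0 : Set (Edge s V)}
    (C : SwChase 𝒬 D0) : Set (Edge s V) := partUnion C.seq C.len

/-- The green full s-pider label. -/
def greenFull (s : ℕ) : ISp s := (true, none, none)

/-- The red full s-pider label. -/
def redFull (s : ℕ) : ISp s := (false, none, none)

/-- The initial s-warm `D_{green}`: a single edge labeled with the green full
s-pider. -/
def D0green (s : ℕ) {V : Type*} (s0 t0 : V) : Set (Edge s V) :=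
  {((true, none, none), s0, t0)}

end Swarm

/-!
Call a s-warm bipartite if no antenna of an edge is the tail of an edge. The initial edge has
distinct ends, and every rule application adds two edges whose new end is a fresh vertex while
their old ends play the same role (tail for `∧↑`, antenna for `∨↑`) as in the input edges; so
bipartiteness survives each step, and it survives the unions taken at limit stages because the
stages form a chain.
-/

namespace Swarm

variable {s : ℕ} {V : Type*}

def IsBipartite (D : Set (Edge s V)) : Prop :=
  ∀ e ∈ D, ∀ e' ∈ D, e.2.2 ≠ e'.2.1

theorem IsBipartite.forall_antenna_ne_or_forall_tail_ne {D : Set (Edge s V)}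
    (hD : IsBipartite D) (v : V) : (∀ e ∈ D, e.2.2 ≠ v) ∨ (∀ e ∈ D, e.2.1 ≠ v) := by
  by_contra! h
  obtain ⟨⟨e, he, rfl⟩, e', he', hv⟩ := h
  exact hD e he e' he' hv.symm

theorem isBipartite_D0green {s0 t0 : V} (hne : s0 ≠ t0) : IsBipartite (D0green s s0 t0) := by
  rintro _ rfl _ rfl
  exact hne.symm

theorem tail_mem_verts {D : Set (Edge s V)} {e : Edge s V} (he : e ∈ D) : e.2.1 ∈ verts D :=
  ⟨e, he, Or.inl rfl⟩

theorem antenna_mem_verts {D : Set (Edge s V)} {e : Edge s V} (he : e ∈ D) : e.2.2 ∈ verts D :=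
  ⟨e, he, Or.inr rfl⟩

theorem SwStepAt.isBipartite {Q : BRule s} {D D' : Set (Edge s V)} {e1 e2 o1 o2 : Edge s V}
    (h : SwStepAt Q D e1 e2 o1 o2 D') (hD : IsBipartite D) : IsBipartite D' := by
  obtain ⟨he1, he2, -, -, -, hshape, rfl⟩ := h
  intro e he e' he'
  cases hw : Q.wedge <;> simp only [hw, Bool.false_eq_true, ite_false, ite_true] at hshape
  case false =>
    obtain ⟨-, ho1, ho2, hsame, hfresh, -⟩ := hshape
    obtain ⟨d, hd, hde⟩ : ∃ d ∈ D, d.2.2 = e.2.2 := by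
      rcases he with hd | rfl | rfl
      exacts [⟨e, hd, rfl⟩, ⟨e1, he1, ho1.symm⟩, ⟨e2, he2, ho2.symm⟩]
    rw [← hde]
    rcases he' with hd' | rfl | rfl
    · exact hD d hd e' hd'
    · exact fun h => hfresh (h ▸ antenna_mem_verts hd)
    · exact fun h => hfresh (hsame ▸ h ▸ antenna_mem_verts hd)
  case true =>
    obtain ⟨-, ho1, ho2, hsame, hfresh, -⟩ := hshape
    obtain ⟨d, hd, hde⟩ : ∃ d ∈ D, d.2.1 = e'.2.1 := by
      rcases he' with hd | rfl | rfl
      exacts [⟨e', hd, rfl⟩, ⟨e1, he1, ho1.symm⟩, ⟨e2, he2, ho2.symm⟩]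
    rw [← hde]
    rcases he with hd' | rfl | rfl
    · exact hD e hd' d hd
    · exact fun h => hfresh (h ▸ tail_mem_verts hd)
    · exact fun h => hfresh (hsame ▸ h ▸ tail_mem_verts hd)

theorem SwStepAt.subset {Q : BRule s} {D D' : Set (Edge s V)} {e1 e2 o1 o2 : Edge s V}
    (h : SwStepAt Q D e1 e2 o1 o2 D') : D ⊆ D' :=
  h.2.2.2.2.2.2 ▸ Set.subset_union_left

theorem mem_partUnion {X : Type*} {seq : Ordinal.{0} → Set X} {i : Ordinal.{0}} {x : X} :
    x ∈ partUnion seq i ↔ ∃ j < i, x ∈ seq j := by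
  simp [partUnion]

theorem isBipartite_partUnion {seq : Ordinal.{0} → Set (Edge s V)} {i : Ordinal.{0}}
    (hmono : MonotoneOn seq (Set.Iio i)) (h : ∀ j < i, IsBipartite (seq j)) :
    IsBipartite (partUnion seq i) := by
  intro e he e' he'
  obtain ⟨j, hj, hej⟩ := mem_partUnion.1 he
  obtain ⟨k, hk, hek⟩ := mem_partUnion.1 he'
  have hjk : max j k < i := max_lt hj hk
  exact h _ hjk e (hmono hj hjk (le_max_left j k) hej) e' (hmono hk hjk (le_max_right j k) hek)

namespace SwChase

variable {𝒬 : Set (BRule s)} {D0 : Set (Edge s V)} (C : SwChase 𝒬 D0)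

theorem partUnion_subset_seq {i : Ordinal.{0}} (hi : i < C.len) :
    partUnion C.seq i ⊆ C.seq i := by
  rcases (zero_le (a := i)).eq_or_lt with rfl | hpos
  · simp [partUnion]
  · obtain ⟨q, -, o1, o2, hstep⟩ := C.step i hpos hi
    exact hstep.subset

theorem seq_monotoneOn : MonotoneOn C.seq (Set.Iio C.len) := by
  intro j _ k hk hjk
  rcases hjk.eq_or_lt with rfl | hlt
  · exact le_rfl
  · exact fun e he => C.partUnion_subset_seq hk (mem_partUnion.2 ⟨j, hlt, he⟩)

theorem isBipartite_seq (hD0 : IsBipartite D0) :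
    ∀ i < C.len, IsBipartite (C.seq i) := by
  intro i
  induction i using WellFoundedLT.induction with
  | _ i ih =>
    intro hi
    rcases (zero_le (a := i)).eq_or_lt with rfl | hpos
    · rwa [C.init]
    · have hprev : IsBipartite (partUnion C.seq i) :=
        isBipartite_partUnion (C.seq_monotoneOn.mono (Set.Iio_subset_Iio hi.le))
          fun j hj => ih j hj (hj.trans hi)
      obtain ⟨q, -, o1, o2, hstep⟩ := C.step i hpos hi
      exact hstep.isBipartite hprev

theorem isBipartite_result (hD0 : IsBipartite D0) : IsBipartite C.result :=
  isBipartite_partUnion C.seq_monotoneOn (C.isBipartite_seq hD0)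

end SwChase

end Swarm

open Swarm in
theorem swarm_bipartite_general {V : Type*} (s : ℕ) (s0 t0 : V) (hne : s0 ≠ t0)
    (𝒬 : Set (BRule s))
    (C : SwChase 𝒬 (D0green s s0 t0)) :
    (∀ v : V, (∀ e ∈ C.result, e.2.2 ≠ v) ∨ (∀ e ∈ C.result, e.2.1 ≠ v)) ∧
    (∀ e ∈ C.result, ∀ e' ∈ C.result, e.2.2 ≠ e'.2.1) := by
  have hC := C.isBipartite_result (isBipartite_D0green hne)
  exact ⟨hC.forall_antenna_ne_or_forall_tail_ne, hC⟩

open Swarm in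
/-- **Bipartite structure of the chase s-warm.**  For a set `𝒬` of
binary s-pider rewriting rules (whose components are s-pider queries, i.e. have at
least one lame index), every vertex of `chase(𝒬, D_green)` has in-degree zero or
out-degree zero; consequently every directed `H`-path has length one. -/
theorem swarm_bipartite {V : Type*} (s : ℕ) (s0 t0 : V) (hne : s0 ≠ t0)
    (𝒬 : Set (BRule s))
    (h𝒬 : ∀ Q ∈ 𝒬, (Q.f.1.isSome ∨ Q.f.2.isSome) ∧ (Q.f'.1.isSome ∨ Q.f'.2.isSome))
    (C : SwChase 𝒬 (D0green s s0 t0)) :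
    (∀ v : V, (∀ e ∈ C.result, e.2.2 ≠ v) ∨ (∀ e ∈ C.result, e.2.1 ≠ v)) ∧
    (∀ e ∈ C.result, ∀ e' ∈ C.result, e.2.2 ≠ e'.2.1) :=
  swarm_bipartite_general s s0 t0 hne 𝒬 C
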